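/- arXiv:1810.09042 — 2 statements merged into one kernel-verified Lean document; each statement's English description precedes it below -/
import Mathlib

section
/- In four-dimensional Minkowski space, if w₁, w₂, w₃ are null vectors (η(wᵢ,wᵢ) = 0 for i = 1,2,3) satisfying w₁ + w₂ + w₃ = 0, then each pair wᵢ, wⱼ is linearly dependent over ℝ; i.e. fewer than four null vectors can sum to zero only if they are all collinear. -/
def mink (x y : Fin 4 → ℝ) : ℝ :=
  -(x 0 * y 0) + x 1 * y 1 + x 2 * y 2 + x 3 * y 3

lemma mink_dep (u v : Fin 4 → ℝ) (hu : mink u u = 0) (hv : mink v v = 0)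
    (huv : mink u v = 0) : ¬ LinearIndependent ℝ ![u, v] := by
  simp only [mink] at hu hv huv
  by_cases hu0 : u 0 = 0
  · have hz : u = 0 := by
      funext i
      fin_cases i <;> simp <;> nlinarith [sq_nonneg (u 1), sq_nonneg (u 2), sq_nonneg (u 3)]
    intro h
    exact (h.ne_zero 0) (by simpa using hz)
  · intro h
    have hs : (v 0 * u 1 - u 0 * v 1)^2 + (v 0 * u 2 - u 0 * v 2)^2
        + (v 0 * u 3 - u 0 * v 3)^2 = 0 := by
      linear_combination (v 0)^2 * hu + (u 0)^2 * hv - 2*(u 0)*(v 0)*huv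
    have q1 : (v 0 * u 1 - u 0 * v 1)^2 = 0 := by
      linarith [hs, sq_nonneg (v 0 * u 2 - u 0 * v 2), sq_nonneg (v 0 * u 3 - u 0 * v 3),
        sq_nonneg (v 0 * u 1 - u 0 * v 1)]
    have q2 : (v 0 * u 2 - u 0 * v 2)^2 = 0 := by
      linarith [hs, sq_nonneg (v 0 * u 2 - u 0 * v 2), sq_nonneg (v 0 * u 3 - u 0 * v 3),
        sq_nonneg (v 0 * u 1 - u 0 * v 1)]
    have q3 : (v 0 * u 3 - u 0 * v 3)^2 = 0 := by
      linarith [hs, sq_nonneg (v 0 * u 2 - u 0 * v 2), sq_nonneg (v 0 * u 3 - u 0 * v 3),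
        sq_nonneg (v 0 * u 1 - u 0 * v 1)]
    have k1 : v 0 * u 1 = u 0 * v 1 := by
      have := pow_eq_zero_iff (n := 2) (by norm_num) |>.mp q1; linarith
    have k2 : v 0 * u 2 = u 0 * v 2 := by
      have := pow_eq_zero_iff (n := 2) (by norm_num) |>.mp q2; linarith
    have k3 : v 0 * u 3 = u 0 * v 3 := by
      have := pow_eq_zero_iff (n := 2) (by norm_num) |>.mp q3; linarith
    have hrel : v 0 • u + (-(u 0)) • v = 0 := by
      funext i
      fin_cases i <;> simp [Pi.smul_apply, smul_eq_mul] <;> linarith [k1, k2, k3]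
    have := (LinearIndependent.pair_iff.mp h) (v 0) (-(u 0)) hrel
    exact hu0 (by linarith [this.2])

/-- If three null vectors in four-dimensional Minkowski space
sum to zero, then each pair of them is linearly dependent over ℝ
(i.e. they are all collinear). -/
theorem three_null_sum_zero_collinear (w₁ w₂ w₃ : Fin 4 → ℝ)
    (h₁ : mink w₁ w₁ = 0) (h₂ : mink w₂ w₂ = 0) (h₃ : mink w₃ w₃ = 0)
    (hsum : w₁ + w₂ + w₃ = 0) :
    ¬ LinearIndependent ℝ ![w₁, w₂] ∧
    ¬ LinearIndependent ℝ ![w₁, w₃] ∧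
    ¬ LinearIndependent ℝ ![w₂, w₃] := by
  have e : ∀ i, w₃ i = -w₁ i - w₂ i := by
    intro i
    have := congrFun hsum i
    simp [Pi.add_apply] at this
    linarith
  have h₃' : mink w₃ w₃ = 0 := h₃
  simp only [mink] at h₁ h₂ h₃
  rw [e 0, e 1, e 2, e 3] at h₃
  have h12 : mink w₁ w₂ = 0 := by simp only [mink]; nlinarith [h₁, h₂, h₃]
  have h13 : mink w₁ w₃ = 0 := by
    simp only [mink] at h12 ⊢; rw [e 0, e 1, e 2, e 3]; nlinarith [h₁, h12]
  have h23 : mink w₂ w₃ = 0 := by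
    simp only [mink] at h12 ⊢; rw [e 0, e 1, e 2, e 3]; nlinarith [h₂, h12]
  exact ⟨mink_dep _ _ (by simp only [mink]; linarith) (by simp only [mink]; linarith) h12,
    mink_dep _ _ (by simp only [mink]; linarith) h₃' h13,
    mink_dep _ _ (by simp only [mink]; linarith) h₃' h23⟩
end

section
/- Let N₁, N₂ ∈ ℝ⁴ be spacelike unit vectors, η(N₁,N₁) = η(N₂,N₂) = 1, spanning a plane of mixed (timelike) signature, i.e. η(N₁,N₂) = cosh θ for some θ > 0. Then the composition of the two η-reflections is the boost by rapidity 2θ in the plane they span: R_{N₁} ∘ R_{N₂} = exp(2θ·B), where B := (1/sinh θ)·(N₁ ∧ N₂) and exp denotes the matrix exponential. -/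
open Matrix

/-- The matrix of the Minkowski form, `η = diag(−1,1,1,1)`. -/
def minkMat : Matrix (Fin 4) (Fin 4) ℝ := Matrix.diagonal ![-1, 1, 1, 1]

/-- The matrix of the η-reflection `R_N(x) = x − 2t·η(N,x)·N`
in a vector `N` with `η(N,N) = t`. -/
def minkReflMat (N : Fin 4 → ℝ) (t : ℝ) : Matrix (Fin 4) (Fin 4) ℝ :=
  1 - (2 * t) • Matrix.of (fun i j : Fin 4 => N i * (minkMat.mulVec N) j)

/-- The matrix of the wedge `N₁ ∧ N₂`, i.e. of the linear map
`x ↦ η(N₂,x)·N₁ − η(N₁,x)·N₂`. -/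
def minkWedgeMat (N₁ N₂ : Fin 4 → ℝ) : Matrix (Fin 4) (Fin 4) ℝ :=
  Matrix.of (fun i j : Fin 4 =>
    N₁ i * (minkMat.mulVec N₂) j - N₂ i * (minkMat.mulVec N₁) j)

noncomputable def EE (a b : Fin 4 → ℝ) : Matrix (Fin 4) (Fin 4) ℝ :=
  Matrix.of (fun i j : Fin 4 => a i * (minkMat.mulVec b) j)

lemma EE_mul (a b c d : Fin 4 → ℝ) : EE a b * EE c d = mink b c • EE a d := by
  ext i j
  simp [EE, mul_apply, mulVec, dotProduct, Fin.sum_univ_four, minkMat, Matrix.diagonal, mink]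
  ring

lemma mink_symm (a b : Fin 4 → ℝ) : mink a b = mink b a := by simp [mink]; ring

lemma wedge_eq (N₁ N₂ : Fin 4 → ℝ) : minkWedgeMat N₁ N₂ = EE N₁ N₂ - EE N₂ N₁ := by
  ext i j; simp [minkWedgeMat, EE]

lemma refl_eq (N : Fin 4 → ℝ) : minkReflMat N 1 = 1 - (2:ℝ) • EE N N := by
  simp [minkReflMat, EE]

lemma exp_smul_idem (P : Matrix (Fin 4) (Fin 4) ℝ) (hP : P * P = P) (l : ℝ) :
    NormedSpace.exp (l • P) = 1 + (Real.exp l - 1) • P := by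
  letI : SeminormedRing (Matrix (Fin 4) (Fin 4) ℝ) := Matrix.linftyOpSemiNormedRing
  letI : NormedRing (Matrix (Fin 4) (Fin 4) ℝ) := Matrix.linftyOpNormedRing
  letI : NormedAlgebra ℝ (Matrix (Fin 4) (Fin 4) ℝ) := Matrix.linftyOpNormedAlgebra
  have hPn : ∀ n : ℕ, P ^ (n + 1) = P := by
    intro n
    induction n with
    | zero => simp
    | succ k ih => rw [pow_succ, ih, hP]
  have key : ∀ n : ℕ, ((Nat.factorial n : ℝ)⁻¹) • (l • P) ^ n
      = (l ^ n / (Nat.factorial n)) • P + (if n = 0 then (1 : Matrix (Fin 4) (Fin 4) ℝ) - P else 0) := by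
    intro n
    cases n with
    | zero => simp
    | succ k =>
      rw [smul_pow, hPn k]
      simp [smul_smul, div_eq_mul_inv, mul_comm]
  rw [NormedSpace.exp_eq_tsum ℝ]
  simp_rw [key]
  have hg : Summable (fun n : ℕ => (l ^ n / (Nat.factorial n)) • P) :=
    (Real.summable_pow_div_factorial l).smul_const P
  have hh : Summable (fun n : ℕ => (if n = 0 then (1 : Matrix (Fin 4) (Fin 4) ℝ) - P else 0)) := by
    apply summable_of_ne_finset_zero (s := {0})
    intro n hn
    simp at hn
    simp [hn]
  rw [Summable.tsum_add hg hh]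
  have h1 : (∑' n : ℕ, (l ^ n / (Nat.factorial n : ℝ)) • P) = Real.exp l • P := by
    rw [Summable.tsum_smul_const (Real.summable_pow_div_factorial l)]
    congr 1
    rw [Real.exp_eq_exp_ℝ, NormedSpace.exp_eq_tsum_div]
  have h2 : (∑' n : ℕ, (if n = 0 then (1 : Matrix (Fin 4) (Fin 4) ℝ) - P else 0)) = 1 - P := by
    rw [tsum_eq_single 0 (by intro n hn; simp [hn])]
    simp
  rw [h1, h2, sub_smul, one_smul]
  abel

lemma boost_exp (Q : Matrix (Fin 4) (Fin 4) ℝ) (s t : ℝ) (hs : s ≠ 0)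
    (hQ3 : Q * Q * Q = (s ^ 2) • Q) :
    NormedSpace.exp (t • (s⁻¹ • Q))
      = 1 + ((Real.exp t - Real.exp (-t)) / (2 * s)) • Q
          + ((Real.exp t + Real.exp (-t) - 2) / (2 * s ^ 2)) • (Q * Q) := by
  have hQR : Q * (Q * Q) = (s ^ 2) • Q := by rw [← mul_assoc]; exact hQ3
  have hRR : (Q * Q) * (Q * Q) = (s ^ 2) • (Q * Q) := by
    rw [← mul_assoc, hQ3, smul_mul_assoc]
  have hpp : ((2 * s ^ 2)⁻¹ • (Q * Q) + (2 * s)⁻¹ • Q)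
      * ((2 * s ^ 2)⁻¹ • (Q * Q) + (2 * s)⁻¹ • Q)
      = (2 * s ^ 2)⁻¹ • (Q * Q) + (2 * s)⁻¹ • Q := by
    simp only [mul_add, add_mul, smul_mul_assoc, mul_smul_comm, smul_smul, hQR, hRR, hQ3]
    match_scalars <;> field_simp <;> ring
  have hmm : ((2 * s ^ 2)⁻¹ • (Q * Q) - (2 * s)⁻¹ • Q)
      * ((2 * s ^ 2)⁻¹ • (Q * Q) - (2 * s)⁻¹ • Q)
      = (2 * s ^ 2)⁻¹ • (Q * Q) - (2 * s)⁻¹ • Q := by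
    simp only [mul_sub, sub_mul, smul_mul_assoc, mul_smul_comm, smul_smul, hQR, hRR, hQ3]
    match_scalars <;> field_simp <;> ring
  have hpm : ((2 * s ^ 2)⁻¹ • (Q * Q) + (2 * s)⁻¹ • Q)
      * ((2 * s ^ 2)⁻¹ • (Q * Q) - (2 * s)⁻¹ • Q) = 0 := by
    simp only [mul_sub, sub_mul, mul_add, add_mul, smul_mul_assoc, mul_smul_comm, smul_smul,
      hQR, hRR, hQ3]
    match_scalars <;> field_simp <;> ring
  have hmp : ((2 * s ^ 2)⁻¹ • (Q * Q) - (2 * s)⁻¹ • Q)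
      * ((2 * s ^ 2)⁻¹ • (Q * Q) + (2 * s)⁻¹ • Q) = 0 := by
    simp only [mul_sub, sub_mul, mul_add, add_mul, smul_mul_assoc, mul_smul_comm, smul_smul,
      hQR, hRR, hQ3]
    match_scalars <;> field_simp <;> ring
  have hsplit : t • (s⁻¹ • Q)
      = t • ((2 * s ^ 2)⁻¹ • (Q * Q) + (2 * s)⁻¹ • Q)
        + (-t) • ((2 * s ^ 2)⁻¹ • (Q * Q) - (2 * s)⁻¹ • Q) := by
    match_scalars <;> field_simp <;> ring
  have hcomm : Commute (t • ((2 * s ^ 2)⁻¹ • (Q * Q) + (2 * s)⁻¹ • Q))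
      ((-t) • ((2 * s ^ 2)⁻¹ • (Q * Q) - (2 * s)⁻¹ • Q)) := by
    unfold Commute SemiconjBy
    rw [smul_mul_assoc, smul_mul_assoc, mul_smul_comm, mul_smul_comm, hpm, hmp]
    simp
  rw [hsplit, Matrix.exp_add_of_commute _ _ hcomm, exp_smul_idem _ hpp,
    exp_smul_idem _ hmm]
  simp only [mul_add, add_mul, one_mul, mul_one, mul_smul_comm, smul_mul_assoc, hpm,
    smul_zero, add_zero, smul_smul]
  match_scalars <;> field_simp <;> ring

/-- For spacelike unit vectors `N₁, N₂` spanning a plane of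
mixed signature with `η(N₁,N₂) = cosh θ`, `θ > 0`, the composite reflection
is the boost by rapidity `2θ` in that plane: `R_{N₁} R_{N₂} = exp(2θ·B)`
with `B = (1/sinh θ)·(N₁ ∧ N₂)`. -/
theorem refl_comp_refl_eq_boost (N₁ N₂ : Fin 4 → ℝ) (θ : ℝ) (hθ : 0 < θ)
    (h₁ : mink N₁ N₁ = 1) (h₂ : mink N₂ N₂ = 1)
    (h₁₂ : mink N₁ N₂ = Real.cosh θ) :
    minkReflMat N₁ 1 * minkReflMat N₂ 1
      = NormedSpace.exp ((2 * θ) • ((Real.sinh θ)⁻¹ • minkWedgeMat N₁ N₂)) := by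
  have hs : Real.sinh θ ≠ 0 := ne_of_gt (by rwa [Real.sinh_pos_iff])
  have hcs : Real.cosh θ ^ 2 = 1 + Real.sinh θ ^ 2 := by rw [Real.cosh_sq]; ring
  have h₂₁ : mink N₂ N₁ = Real.cosh θ := by rw [mink_symm]; exact h₁₂
  have hW : minkWedgeMat N₁ N₂ = EE N₁ N₂ - EE N₂ N₁ := wedge_eq N₁ N₂
  have hQ2 : minkWedgeMat N₁ N₂ * minkWedgeMat N₁ N₂
      = Real.cosh θ • EE N₁ N₂ + Real.cosh θ • EE N₂ N₁ - EE N₁ N₁ - EE N₂ N₂ := by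
    rw [hW]
    simp only [sub_mul, mul_sub, EE_mul, h₁, h₂, h₁₂, h₂₁, one_smul]
    module
  have hQ3 : minkWedgeMat N₁ N₂ * minkWedgeMat N₁ N₂ * minkWedgeMat N₁ N₂
      = (Real.sinh θ ^ 2) • minkWedgeMat N₁ N₂ := by
    rw [hQ2, hW]
    simp only [sub_mul, mul_sub, mul_add, add_mul, smul_mul_assoc, mul_smul_comm,
      EE_mul, h₁, h₂, h₁₂, h₂₁, one_smul, smul_smul]
    match_scalars <;> first | ring1 | linear_combination hcs | linear_combination -hcs
  rw [boost_exp _ _ _ hs hQ3]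
  have hea : Real.exp (2 * θ)
      = Real.cosh θ ^ 2 + 2 * Real.sinh θ * Real.cosh θ + Real.sinh θ ^ 2 := by
    rw [← Real.cosh_add_sinh (2 * θ), Real.cosh_two_mul, Real.sinh_two_mul]
    first | ring1 | linear_combination hcs | linear_combination -hcs
  have heb : Real.exp (-(2 * θ))
      = Real.cosh θ ^ 2 - 2 * Real.sinh θ * Real.cosh θ + Real.sinh θ ^ 2 := by
    rw [← Real.cosh_sub_sinh (2 * θ), Real.cosh_two_mul, Real.sinh_two_mul]
    first | ring1 | linear_combination hcs | linear_combination -hcs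
  have hA : (Real.exp (2 * θ) - Real.exp (-(2 * θ))) / (2 * Real.sinh θ) = 2 * Real.cosh θ := by
    rw [hea, heb]; field_simp; ring
  have hB : (Real.exp (2 * θ) + Real.exp (-(2 * θ)) - 2) / (2 * Real.sinh θ ^ 2) = 2 := by
    rw [hea, heb]; field_simp; linear_combination 2 * hcs
  rw [hA, hB, hQ2, hW, refl_eq, refl_eq]
  simp only [mul_sub, sub_mul, mul_one, one_mul, smul_mul_assoc, mul_smul_comm, smul_smul,
    EE_mul, h₁, h₂, h₁₂, h₂₁, one_smul]
  match_scalars <;>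
    first
      | ring1
      | linear_combination hcs
      | linear_combination -hcs
      | linear_combination 2 * hcs
      | linear_combination -2 * hcs
      | linear_combination 4 * hcs
      | linear_combination -4 * hcs
end
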